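/- arXiv:1603.06709 — 2 statements merged into one kernel-verified Lean document; each statement's English description precedes it below -/
import Mathlib

section
/- For every p ∈ (1,∞), setting p* = p/(p−1), and for every real x, one has sin_{2,p}(2^{2/p}·x) = 2^{2/p}·sin_{p*,p}(x)·|cos_{p*,p}(x)|^{p*−2}·cos_{p*,p}(x), and cos_{2,p}(2^{2/p}·x) = |cos_{p*,p}(x)|^{p*} − |sin_{p*,p}(x)|^p = 1 − 2|sin_{p*,p}(x)|^p = 2|cos_{p*,p}(x)|^{p*} − 1. -/
open Real Set MeasureTheory Filter

/-- `sin_{p,q}^{-1}(x) = ∫₀ˣ (1-t^q)^{-1/p} dt`. -/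
noncomputable def arcsinpq (p q x : ℝ) : ℝ := ∫ t in (0:ℝ)..x, (1 - t ^ q) ^ (-(1 / p))

/-- The generalized π: `π_{p,q} = 2 sin_{p,q}^{-1}(1)`. -/
noncomputable def pipq (p q : ℝ) : ℝ := 2 * arcsinpq p q 1

/-- `sin_{p,q}` on `[0, π_{p,q}/2]`, as the inverse of `arcsinpq p q : [0,1] → [0, π_{p,q}/2]`. -/
noncomputable def sinHalf (p q : ℝ) : ℝ → ℝ := Function.invFunOn (arcsinpq p q) (Set.Icc 0 1)

/-- `sin_{p,q}` on all of `ℝ`: extended to `[π_{p,q}/2, π_{p,q}]` by `sin_{p,q}(π_{p,q}-x)` and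
then to `ℝ` as the odd `2π_{p,q}`-periodic continuation. -/
noncomputable def sinpq (p q x : ℝ) : ℝ :=
  let T := pipq p q
  let y := x - 2 * T * (⌊(x + T) / (2 * T)⌋ : ℝ)
  if y < 0 then -(sinHalf p q (if -y ≤ T / 2 then -y else T + y))
  else sinHalf p q (if y ≤ T / 2 then y else T - y)

/-- `cos_{p,q} = (sin_{p,q})'`. -/
noncomputable def cospq (p q : ℝ) : ℝ → ℝ := deriv (sinpq p q)

/-- Rising factorial (Pochhammer symbol) `(a)_n = a(a+1)⋯(a+n-1)`. -/
noncomputable def poch (a : ℝ) (n : ℕ) : ℝ := ∏ i ∈ Finset.range n, (a + i)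

/-!
Write `F_{a,q} = arcsinpq a q`, `c = 2^{2/p}`, and let `r` be the Hölder conjugate of `p`.
Differentiating both sides gives `F_{2,p}(c σ (1 - σ^p)^{1/p}) = c F_{r,p}(σ)` for `σ^p ≤ 1/2`,
and `F_{r,p}(σ) + F_{r,p}((1 - σ^p)^{1/p}) = π_{r,p}/2` for `σ ∈ [0,1]`. With `σ = sin_{r,p} x`
the first identity is the claim for `x ∈ [0, π_{r,p}/4]`; the second one reflects it to
`[π_{r,p}/4, π_{r,p}/2]` and, at `σ^p = 1/2`, shows `π_{2,p} = c π_{r,p}/2`. Oddness and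
`sin(x + π) = -sin x` for both functions then extend it to `ℝ`, and the remaining expressions for
`cos_{2,p}` come from `|sin_{a,q}|^q + |cos_{a,q}|^a = 1`.
-/

open Topology

section Arcsin

variable {a q : ℝ}

lemma one_sub_rpow_pos (hq : 0 < q) {t : ℝ} (ht : t ∈ Ico (0:ℝ) 1) : 0 < 1 - t ^ q :=
  sub_pos.2 (rpow_lt_one ht.1 ht.2 hq)

lemma intervalIntegrable_arcsinpq_integrand_zero_one (ha : 1 < a) (hq : 1 ≤ q) :
    IntervalIntegrable (fun t : ℝ => (1 - t ^ q) ^ (-(1 / a))) volume 0 1 := by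
  have hexp : -(1 / a) ≤ 0 := neg_nonpos.2 (by positivity)
  have hdom : IntervalIntegrable (fun t : ℝ => (1 - t) ^ (-(1 / a))) volume 0 1 := by
    have h := (intervalIntegral.intervalIntegrable_rpow' (a := 0) (b := 1)
      (r := -(1 / a)) (by rw [neg_lt_neg_iff, div_lt_one (by linarith)]; exact ha)).comp_sub_left 1
    simpa using h.symm
  refine hdom.mono_fun (by fun_prop : Measurable _).aestronglyMeasurable
    ((ae_restrict_iff' measurableSet_uIoc).2 (ae_of_all _ fun t ht => ?_))
  rw [uIoc_of_le zero_le_one] at ht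
  dsimp only
  rw [norm_of_nonneg (rpow_nonneg (sub_nonneg.2 (rpow_le_one ht.1.le ht.2 (by linarith))) _),
    norm_of_nonneg (rpow_nonneg (sub_nonneg.2 ht.2) _)]
  rcases ht.2.eq_or_lt with rfl | ht1
  · simp
  · have ht_le : t ^ q ≤ t := by
      simpa using rpow_le_rpow_of_exponent_ge ht.1 ht1.le hq
    exact rpow_le_rpow_of_nonpos (by linarith) (by linarith) hexp

lemma intervalIntegrable_arcsinpq_integrand (ha : 1 < a) (hq : 1 ≤ q) {x y : ℝ}
    (hx : x ∈ Icc (0:ℝ) 1) (hy : y ∈ Icc (0:ℝ) 1) :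
    IntervalIntegrable (fun t : ℝ => (1 - t ^ q) ^ (-(1 / a))) volume x y :=
  (intervalIntegrable_arcsinpq_integrand_zero_one ha hq).mono_set <| by
    rw [uIcc_of_le zero_le_one]; exact uIcc_subset_Icc hx hy

lemma arcsinpq_zero : arcsinpq a q 0 = 0 := intervalIntegral.integral_same

lemma arcsinpq_one : arcsinpq a q 1 = pipq a q / 2 := by rw [pipq]; ring

lemma arcsinpq_sub_arcsinpq (ha : 1 < a) (hq : 1 ≤ q) {x y : ℝ} (hx : x ∈ Icc (0:ℝ) 1)
    (hy : y ∈ Icc (0:ℝ) 1) :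
    arcsinpq a q y - arcsinpq a q x = ∫ t in x..y, (1 - t ^ q) ^ (-(1 / a)) :=
  intervalIntegral.integral_interval_sub_left
    (intervalIntegrable_arcsinpq_integrand ha hq (by simp) hy)
    (intervalIntegrable_arcsinpq_integrand ha hq (by simp) hx)

lemma arcsinpq_strictMonoOn (ha : 1 < a) (hq : 1 ≤ q) :
    StrictMonoOn (arcsinpq a q) (Icc 0 1) := by
  intro x hx y hy hxy
  rw [← sub_pos, arcsinpq_sub_arcsinpq ha hq hx hy]
  refine intervalIntegral.intervalIntegral_pos_of_pos_on
    (intervalIntegrable_arcsinpq_integrand ha hq hx hy) (fun t ht => ?_) hxy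
  exact rpow_pos_of_pos
    (one_sub_rpow_pos (by linarith) ⟨hx.1.trans ht.1.le, ht.2.trans_le hy.2⟩) _

lemma arcsinpq_continuousOn (ha : 1 < a) (hq : 1 ≤ q) :
    ContinuousOn (arcsinpq a q) (Icc 0 1) := by
  have h := intervalIntegral.continuousOn_primitive_interval'
    (intervalIntegrable_arcsinpq_integrand_zero_one ha hq) (left_mem_uIcc (b := (1:ℝ)))
  rwa [uIcc_of_le zero_le_one] at h

lemma arcsinpq_hasDerivAt (ha : 1 < a) (hq : 1 ≤ q) {s : ℝ} (hs : s ∈ Ico (0:ℝ) 1) :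
    HasDerivAt (arcsinpq a q) ((1 - s ^ q) ^ (-(1 / a))) s :=
  intervalIntegral.integral_hasDerivAt_right
    (intervalIntegrable_arcsinpq_integrand ha hq (by simp) ⟨hs.1, hs.2.le⟩)
    (by fun_prop : Measurable _).aestronglyMeasurable.stronglyMeasurableAtFilter
    (((continuousAt_id.rpow_const (Or.inr (by linarith))).const_sub 1).rpow_const
      (Or.inl (one_sub_rpow_pos (by linarith) hs).ne'))

lemma pipq_pos (ha : 1 < a) (hq : 1 ≤ q) : 0 < pipq a q := by
  have h := arcsinpq_strictMonoOn ha hq (left_mem_Icc.2 zero_le_one) (right_mem_Icc.2 zero_le_one)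
    zero_lt_one
  rw [arcsinpq_zero, arcsinpq_one] at h
  linarith

lemma arcsinpq_bijOn (ha : 1 < a) (hq : 1 ≤ q) :
    BijOn (arcsinpq a q) (Icc 0 1) (Icc 0 (pipq a q / 2)) := by
  have hmono := (arcsinpq_strictMonoOn ha hq).monotoneOn
  refine ⟨fun x hx => ?_, (arcsinpq_strictMonoOn ha hq).injOn, ?_⟩
  · rw [← arcsinpq_zero (a := a) (q := q), ← arcsinpq_one]
    exact ⟨hmono (left_mem_Icc.2 zero_le_one) hx hx.1,
      hmono hx (right_mem_Icc.2 zero_le_one) hx.2⟩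
  · have h := intermediate_value_Icc zero_le_one (arcsinpq_continuousOn ha hq)
    rwa [arcsinpq_zero, arcsinpq_one] at h

end Arcsin

section Sin

variable {a q : ℝ}

/-- `sinpq a q x = sinpqFold a q y`, where `y ∈ [-π_{a,q}, π_{a,q})` is `x` reduced modulo
`2π_{a,q}`. -/
noncomputable def sinpqFold (a q z : ℝ) : ℝ :=
  if z < 0 then -(sinHalf a q (if -z ≤ pipq a q / 2 then -z else pipq a q + z))
  else sinHalf a q (if z ≤ pipq a q / 2 then z else pipq a q - z)

lemma sinHalf_arcsinpq (ha : 1 < a) (hq : 1 ≤ q) {s : ℝ} (hs : s ∈ Icc (0:ℝ) 1) :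
    sinHalf a q (arcsinpq a q s) = s :=
  (arcsinpq_bijOn ha hq).invOn_invFunOn.1 hs

lemma arcsinpq_sinHalf (ha : 1 < a) (hq : 1 ≤ q) {x : ℝ} (hx : x ∈ Icc 0 (pipq a q / 2)) :
    arcsinpq a q (sinHalf a q x) = x :=
  (arcsinpq_bijOn ha hq).invOn_invFunOn.2 hx

lemma sinHalf_mem_Icc (ha : 1 < a) (hq : 1 ≤ q) {x : ℝ} (hx : x ∈ Icc 0 (pipq a q / 2)) :
    sinHalf a q x ∈ Icc (0:ℝ) 1 :=
  (arcsinpq_bijOn ha hq).surjOn.mapsTo_invFunOn hx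

lemma sinHalf_zero (ha : 1 < a) (hq : 1 ≤ q) : sinHalf a q 0 = 0 := by
  simpa [arcsinpq_zero] using sinHalf_arcsinpq ha hq (left_mem_Icc.2 zero_le_one)

lemma sinpqFold_neg (ha : 1 < a) (hq : 1 ≤ q) (z : ℝ) :
    sinpqFold a q (-z) = -sinpqFold a q z := by
  have hT := half_pos (pipq_pos ha hq)
  rcases lt_trichotomy z 0 with hz0 | rfl | hz0
  · unfold sinpqFold
    rw [if_neg (by linarith : ¬-z < 0), if_pos hz0, neg_neg, sub_neg_eq_add]
  · simp only [sinpqFold, neg_zero, lt_irrefl, if_false, if_pos hT.le, sinHalf_zero ha hq]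
  · unfold sinpqFold
    rw [if_pos (by linarith : -z < 0), if_neg (by linarith : ¬z < 0), neg_neg, ← sub_eq_add_neg]

lemma sinpqFold_add_pipq (ha : 1 < a) (hq : 1 ≤ q) {z : ℝ} (hz : z ∈ Icc (-pipq a q) 0) :
    sinpqFold a q (z + pipq a q) = -sinpqFold a q z := by
  have hT := pipq_pos ha hq
  unfold sinpqFold
  rw [if_neg (by linarith [hz.1])]
  rcases hz.2.lt_or_eq with hz0 | rfl
  · rw [if_pos hz0, neg_neg]
    congr 1
    split_ifs <;> linarith
  · rw [if_neg (lt_irrefl 0), if_neg (by linarith : ¬0 + pipq a q ≤ pipq a q / 2),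
      if_pos (by linarith : (0:ℝ) ≤ pipq a q / 2), zero_add, sub_self, sinHalf_zero ha hq,
      neg_zero]

lemma exists_eq_add_int_mul (ha : 1 < a) (hq : 1 ≤ q) (x : ℝ) :
    ∃ z ∈ Ico (-pipq a q) (pipq a q), ∃ k : ℤ, x = z + k * (2 * pipq a q) := by
  have hT := pipq_pos ha hq
  set k := ⌊(x + pipq a q) / (2 * pipq a q)⌋
  have h1 := Int.floor_le ((x + pipq a q) / (2 * pipq a q))
  have h2 := Int.lt_floor_add_one ((x + pipq a q) / (2 * pipq a q))
  rw [le_div_iff₀ (by linarith)] at h1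
  rw [div_lt_iff₀ (by linarith)] at h2
  exact ⟨x - k * (2 * pipq a q), ⟨by linarith, by linarith⟩, k, by ring⟩

lemma sinpq_add_int_mul (ha : 1 < a) (hq : 1 ≤ q) {z : ℝ}
    (hz : z ∈ Icc (-pipq a q) (pipq a q)) (k : ℤ) :
    sinpq a q (z + k * (2 * pipq a q)) = sinpqFold a q z := by
  have hT := pipq_pos ha hq
  have hIco : ∀ w ∈ Ico (-pipq a q) (pipq a q), ∀ k : ℤ,
      sinpq a q (w + k * (2 * pipq a q)) = sinpqFold a q w := by
    intro w hw k
    have hk : ⌊(w + k * (2 * pipq a q) + pipq a q) / (2 * pipq a q)⌋ = k := by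
      rw [Int.floor_eq_iff, le_div_iff₀ (by linarith), div_lt_iff₀ (by linarith)]
      constructor <;> linarith [hw.1, hw.2]
    show sinpqFold a q (_ - 2 * pipq a q * (⌊_⌋ : ℝ)) = _
    rw [hk]
    ring_nf
  rcases hz.2.lt_or_eq with hzT | rfl
  · exact hIco z ⟨hz.1, hzT⟩ k
  · have h := hIco (-pipq a q) ⟨le_rfl, by linarith⟩ (k + 1)
    rw [show -pipq a q + ((k + 1 : ℤ) : ℝ) * (2 * pipq a q) = pipq a q + k * (2 * pipq a q) by
      push_cast; ring] at h
    rw [h]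
    simp only [sinpqFold, if_pos (neg_lt_zero.2 hT), if_neg (not_lt.2 hT.le), neg_neg,
      if_neg (by linarith : ¬pipq a q ≤ pipq a q / 2), add_neg_cancel, sub_self,
      sinHalf_zero ha hq, neg_zero]

lemma sinpq_neg (ha : 1 < a) (hq : 1 ≤ q) (x : ℝ) : sinpq a q (-x) = -sinpq a q x := by
  obtain ⟨z, hz, k, rfl⟩ := exists_eq_add_int_mul ha hq x
  rw [show -(z + k * (2 * pipq a q)) = -z + ((-k : ℤ) : ℝ) * (2 * pipq a q) by push_cast; ring,
    sinpq_add_int_mul ha hq ⟨by linarith [hz.2], by linarith [hz.1]⟩,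
    sinpq_add_int_mul ha hq (Ico_subset_Icc_self hz), sinpqFold_neg ha hq]

lemma sinpq_add_pipq (ha : 1 < a) (hq : 1 ≤ q) (x : ℝ) :
    sinpq a q (x + pipq a q) = -sinpq a q x := by
  have hT := pipq_pos ha hq
  obtain ⟨z, hz, k, rfl⟩ := exists_eq_add_int_mul ha hq x
  rw [sinpq_add_int_mul ha hq (Ico_subset_Icc_self hz)]
  rcases lt_or_ge z 0 with hz0 | hz0
  · rw [show z + k * (2 * pipq a q) + pipq a q = (z + pipq a q) + k * (2 * pipq a q) by ring,
      sinpq_add_int_mul ha hq ⟨by linarith [hz.1], by linarith⟩,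
      sinpqFold_add_pipq ha hq ⟨hz.1, hz0.le⟩]
  · rw [show z + k * (2 * pipq a q) + pipq a q
        = (z - pipq a q) + ((k + 1 : ℤ) : ℝ) * (2 * pipq a q) by push_cast; ring,
      sinpq_add_int_mul ha hq ⟨by linarith, by linarith [hz.2]⟩,
      ← neg_neg (sinpqFold a q (z - pipq a q)),
      ← sinpqFold_add_pipq ha hq ⟨by linarith, by linarith [hz.2]⟩, sub_add_cancel]

lemma sinpq_pipq_sub (ha : 1 < a) (hq : 1 ≤ q) (x : ℝ) :
    sinpq a q (pipq a q - x) = sinpq a q x := by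
  rw [sub_eq_neg_add, sinpq_add_pipq ha hq, sinpq_neg ha hq, neg_neg]

lemma sinpq_eq_sinHalf (ha : 1 < a) (hq : 1 ≤ q) {x : ℝ} (hx : x ∈ Icc 0 (pipq a q / 2)) :
    sinpq a q x = sinHalf a q x := by
  have hT := pipq_pos ha hq
  have h := sinpq_add_int_mul ha hq (z := x) ⟨by linarith [hx.1], by linarith [hx.2]⟩ 0
  rwa [Int.cast_zero, zero_mul, add_zero, sinpqFold, if_neg (not_lt.2 hx.1), if_pos hx.2] at h

lemma sinpq_arcsinpq (ha : 1 < a) (hq : 1 ≤ q) {s : ℝ} (hs : s ∈ Icc (0:ℝ) 1) :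
    sinpq a q (arcsinpq a q s) = s := by
  rw [sinpq_eq_sinHalf ha hq ((arcsinpq_bijOn ha hq).mapsTo hs), sinHalf_arcsinpq ha hq hs]

lemma arcsinpq_sinpq (ha : 1 < a) (hq : 1 ≤ q) {x : ℝ} (hx : x ∈ Icc 0 (pipq a q / 2)) :
    arcsinpq a q (sinpq a q x) = x := by
  rw [sinpq_eq_sinHalf ha hq hx, arcsinpq_sinHalf ha hq hx]

lemma sinpq_mem_Icc (ha : 1 < a) (hq : 1 ≤ q) {x : ℝ} (hx : x ∈ Icc 0 (pipq a q / 2)) :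
    sinpq a q x ∈ Icc (0:ℝ) 1 := by
  rw [sinpq_eq_sinHalf ha hq hx]; exact sinHalf_mem_Icc ha hq hx

lemma sinpq_zero (ha : 1 < a) (hq : 1 ≤ q) : sinpq a q 0 = 0 := by
  simpa [arcsinpq_zero] using sinpq_arcsinpq ha hq (left_mem_Icc.2 zero_le_one)

lemma sinpq_pipq_div_two (ha : 1 < a) (hq : 1 ≤ q) : sinpq a q (pipq a q / 2) = 1 := by
  simpa [arcsinpq_one] using sinpq_arcsinpq ha hq (right_mem_Icc.2 zero_le_one)

lemma sinpq_continuousOn (ha : 1 < a) (hq : 1 ≤ q) :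
    ContinuousOn (sinpq a q) (Icc 0 (pipq a q / 2)) := by
  let f : Icc 0 (pipq a q / 2) → Icc (0:ℝ) 1 := fun x =>
    ⟨sinpq a q x, sinpq_mem_Icc ha hq x.2⟩
  have hmono : Monotone f := fun x y hxy => by
    rw [Subtype.mk_le_mk, ← (arcsinpq_strictMonoOn ha hq).le_iff_le (sinpq_mem_Icc ha hq x.2)
      (sinpq_mem_Icc ha hq y.2), arcsinpq_sinpq ha hq x.2, arcsinpq_sinpq ha hq y.2]
    exact hxy
  have hsurj : Function.Surjective f := fun s =>
    ⟨⟨_, (arcsinpq_bijOn ha hq).mapsTo s.2⟩, Subtype.ext (sinpq_arcsinpq ha hq s.2)⟩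
  rw [continuousOn_iff_continuous_domRestrict]
  exact continuous_subtype_val.comp (hmono.continuous_of_surjective hsurj)

end Sin

section Deriv

lemma HasDerivWithinAt.hasDerivAt_of_odd {f : ℝ → ℝ} {e : ℝ}
    (h : HasDerivWithinAt f e (Ici 0) 0) (hodd : ∀ x, f (-x) = -f x) : HasDerivAt f e 0 := by
  have hleft := (h.comp_of_eq 0 ((hasDerivAt_neg 0).hasDerivWithinAt (s := Iic 0))
    (fun x hx => neg_nonneg.2 hx) neg_zero.symm).neg
  simp only [Pi.neg_def, Function.comp_def, hodd, neg_neg, mul_neg, mul_one] at hleft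
  simpa [Iic_union_Ici] using hleft.union h

lemma HasDerivWithinAt.hasDerivAt_of_symmetric {f : ℝ → ℝ} {c : ℝ}
    (h : HasDerivWithinAt f 0 (Iic c) c) (hsymm : ∀ x, f (2 * c - x) = f x) :
    HasDerivAt f 0 c := by
  have hright := h.comp_of_eq c
    (((hasDerivAt_id c).const_sub (2 * c)).hasDerivWithinAt (s := Ici c))
      (fun x (hx : c ≤ x) => show 2 * c - x ≤ c by linarith) (by simp; ring)
  simp only [Function.comp_def, hsymm, zero_mul] at hright
  simpa [Iic_union_Ici] using h.union hright

variable {a q : ℝ}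

lemma sinpq_hasDerivAt_of_mem_Ioo (ha : 1 < a) (hq : 1 ≤ q) {x : ℝ}
    (hx : x ∈ Ioo 0 (pipq a q / 2)) :
    HasDerivAt (sinpq a q) ((1 - sinpq a q x ^ q) ^ (1 / a)) x := by
  have hxI := Ioo_subset_Icc_self hx
  have hs := sinpq_mem_Icc ha hq hxI
  have hs1 : sinpq a q x < 1 := hs.2.lt_of_ne fun h => by
    have := arcsinpq_sinpq ha hq hxI
    rw [h, arcsinpq_one] at this
    exact hx.2.ne this.symm
  have hbase := one_sub_rpow_pos (q := q) (by linarith) ⟨hs.1, hs1⟩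
  have hinv := HasDerivAt.of_local_left_inverse
    ((sinpq_continuousOn ha hq x hxI).continuousAt (Icc_mem_nhds hx.1 hx.2))
    (arcsinpq_hasDerivAt ha hq ⟨hs.1, hs1⟩) (rpow_pos_of_pos hbase _).ne'
    (by filter_upwards [Ioo_mem_nhds hx.1 hx.2] with y hy
        using arcsinpq_sinpq ha hq (Ioo_subset_Icc_self hy))
  rwa [rpow_neg hbase.le, inv_inv] at hinv

lemma tendsto_deriv_sinpq (ha : 1 < a) (hq : 1 ≤ q) {x : ℝ} (hx : x ∈ Icc 0 (pipq a q / 2)) :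
    Tendsto (deriv (sinpq a q)) (𝓝[Ioo 0 (pipq a q / 2)] x)
      (𝓝 ((1 - sinpq a q x ^ q) ^ (1 / a))) := by
  have hcont : ContinuousOn (fun y => (1 - sinpq a q y ^ q) ^ (1 / a)) (Icc 0 (pipq a q / 2)) :=
    (continuousOn_const.sub ((sinpq_continuousOn ha hq).rpow_const fun _ _ =>
      Or.inr (by linarith))).rpow_const fun _ _ => Or.inr (by positivity)
  refine ((hcont x hx).mono Ioo_subset_Icc_self).tendsto.congr' ?_
  filter_upwards [self_mem_nhdsWithin] with y hy
  exact (sinpq_hasDerivAt_of_mem_Ioo ha hq hy).deriv.symm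

lemma sinpq_differentiableOn (ha : 1 < a) (hq : 1 ≤ q) :
    DifferentiableOn ℝ (sinpq a q) (Ioo 0 (pipq a q / 2)) := fun _ hy =>
  (sinpq_hasDerivAt_of_mem_Ioo ha hq hy).differentiableAt.differentiableWithinAt

lemma cospq_zero (ha : 1 < a) (hq : 1 ≤ q) : cospq a q 0 = 1 := by
  have hT := half_pos (pipq_pos ha hq)
  have hlim := tendsto_deriv_sinpq ha hq (left_mem_Icc.2 hT.le)
  rw [nhdsWithin_Ioo_eq_nhdsGT hT, sinpq_zero ha hq, zero_rpow (by linarith), sub_zero,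
    one_rpow] at hlim
  exact ((hasDerivWithinAt_Ici_of_tendsto_deriv (sinpq_differentiableOn ha hq)
    ((sinpq_continuousOn ha hq 0 (left_mem_Icc.2 hT.le)).mono Ioo_subset_Icc_self)
    (Ioo_mem_nhdsGT hT) hlim).hasDerivAt_of_odd (sinpq_neg ha hq)).deriv

/- `arcsinpq` has infinite slope at `1`, so the inverse function theorem gives nothing at `π/2`:
the left derivative is the limit of `deriv`, and the reflection `sinpq (π - x) = sinpq x`
supplies the right one. -/
lemma cospq_pipq_div_two (ha : 1 < a) (hq : 1 ≤ q) : cospq a q (pipq a q / 2) = 0 := by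
  have hT := half_pos (pipq_pos ha hq)
  have hlim := tendsto_deriv_sinpq ha hq (right_mem_Icc.2 hT.le)
  rw [nhdsWithin_Ioo_eq_nhdsLT hT, sinpq_pipq_div_two ha hq, one_rpow, sub_self,
    zero_rpow (by positivity)] at hlim
  refine ((hasDerivWithinAt_Iic_of_tendsto_deriv (sinpq_differentiableOn ha hq)
    ((sinpq_continuousOn ha hq _ (right_mem_Icc.2 hT.le)).mono Ioo_subset_Icc_self)
    (Ioo_mem_nhdsLT hT) hlim).hasDerivAt_of_symmetric fun x => ?_).deriv
  rw [mul_div_cancel₀ _ two_ne_zero, sinpq_pipq_sub ha hq]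

lemma cospq_eq_of_mem_Icc (ha : 1 < a) (hq : 1 ≤ q) {x : ℝ} (hx : x ∈ Icc 0 (pipq a q / 2)) :
    cospq a q x = (1 - sinpq a q x ^ q) ^ (1 / a) := by
  rcases hx.1.eq_or_lt with rfl | hx0
  · rw [cospq_zero ha hq, sinpq_zero ha hq, zero_rpow (by linarith), sub_zero, one_rpow]
  rcases hx.2.eq_or_lt with rfl | hx1
  · rw [cospq_pipq_div_two ha hq, sinpq_pipq_div_two ha hq, one_rpow, sub_self,
      zero_rpow (by positivity)]
  exact (sinpq_hasDerivAt_of_mem_Ioo ha hq ⟨hx0, hx1⟩).deriv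

lemma cospq_neg (ha : 1 < a) (hq : 1 ≤ q) (x : ℝ) : cospq a q (-x) = cospq a q x := by
  have h : sinpq a q = fun y => -sinpq a q (-y) := funext fun y => by rw [sinpq_neg ha hq, neg_neg]
  rw [cospq, h, deriv.fun_neg, deriv_comp_neg, neg_neg, ← h, neg_neg]

lemma cospq_add_pipq (ha : 1 < a) (hq : 1 ≤ q) (x : ℝ) :
    cospq a q (x + pipq a q) = -cospq a q x := by
  have h : sinpq a q = fun y => -sinpq a q (y + pipq a q) :=
    funext fun y => by rw [sinpq_add_pipq ha hq, neg_neg]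
  conv_rhs => rw [cospq, h]
  rw [deriv.fun_neg, deriv_comp_add_const, cospq, neg_neg]

lemma cospq_pipq_sub (ha : 1 < a) (hq : 1 ≤ q) (x : ℝ) :
    cospq a q (pipq a q - x) = -cospq a q x := by
  rw [sub_eq_neg_add, cospq_add_pipq ha hq, cospq_neg ha hq]

end Deriv

lemma forall_of_Icc_of_neg_of_add {T : ℝ} (hT : 0 < T) {P : ℝ → Prop}
    (hbase : ∀ x ∈ Icc 0 (T / 2), P x) (hneg : ∀ x, P x → P (-x))
    (hadd : ∀ x, P x → P (x + T)) (x : ℝ) : P x := by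
  have hcentral : ∀ y, |y| ≤ T / 2 → P y := by
    intro y hy
    rcases le_or_gt 0 y with hy0 | hy0
    · exact hbase y ⟨hy0, (le_abs_self y).trans hy⟩
    · simpa using hneg _ (hbase (-y) ⟨by linarith, (neg_le_abs y).trans hy⟩)
  have hshift : ∀ n : ℤ, ∀ y, P y → P (y + n * T) := by
    intro n
    induction n using Int.induction_on with
    | zero => simp
    | succ k ih =>
      intro y hy
      simpa [add_mul, add_assoc] using hadd _ (ih y hy)
    | pred k ih =>
      intro y hy
      convert hneg _ (hadd _ (hneg _ (ih y hy))) using 1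
      push_cast; ring
  have hround : |x - round (x / T) * T| ≤ T / 2 := by
    have h := abs_sub_round (x / T)
    rw [show x - round (x / T) * T = (x / T - round (x / T)) * T by field_simp, abs_mul,
      abs_of_pos hT]
    nlinarith
  simpa using hshift (round (x / T)) _ (hcentral _ hround)

section Pythagoras

variable {a q : ℝ}

lemma cospq_nonneg_of_mem_Icc (ha : 1 < a) (hq : 1 ≤ q) {x : ℝ}
    (hx : x ∈ Icc 0 (pipq a q / 2)) : 0 ≤ cospq a q x := by
  have hs := sinpq_mem_Icc ha hq hx
  rw [cospq_eq_of_mem_Icc ha hq hx]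
  exact rpow_nonneg (sub_nonneg.2 (rpow_le_one hs.1 hs.2 (by linarith))) _

lemma sinpq_rpow_add_cospq_rpow_of_mem_Icc (ha : 1 < a) (hq : 1 ≤ q) {x : ℝ}
    (hx : x ∈ Icc 0 (pipq a q / 2)) : sinpq a q x ^ q + cospq a q x ^ a = 1 := by
  have hs := sinpq_mem_Icc ha hq hx
  rw [cospq_eq_of_mem_Icc ha hq hx, one_div,
    rpow_inv_rpow (sub_nonneg.2 (rpow_le_one hs.1 hs.2 (by linarith))) (by linarith)]
  ring

lemma abs_sinpq_rpow_add_abs_cospq_rpow (ha : 1 < a) (hq : 1 ≤ q) (x : ℝ) :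
    |sinpq a q x| ^ q + |cospq a q x| ^ a = 1 := by
  refine forall_of_Icc_of_neg_of_add (P := fun x => |sinpq a q x| ^ q + |cospq a q x| ^ a = 1)
    (pipq_pos ha hq) (fun y hy => ?_) (fun y hy => ?_) (fun y hy => ?_) x
  · rw [abs_of_nonneg (sinpq_mem_Icc ha hq hy).1, abs_of_nonneg (cospq_nonneg_of_mem_Icc ha hq hy)]
    exact sinpq_rpow_add_cospq_rpow_of_mem_Icc ha hq hy
  · rwa [sinpq_neg ha hq, cospq_neg ha hq, abs_neg]
  · rwa [sinpq_add_pipq ha hq, cospq_add_pipq ha hq, abs_neg, abs_neg]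

end Pythagoras

section Doubling

variable {p : ℝ}

lemma hasDerivAt_one_sub_rpow_rpow_one_div (hp : 1 ≤ p) {x : ℝ} (hx : 0 < 1 - x ^ p) :
    HasDerivAt (fun t => (1 - t ^ p) ^ (1 / p)) (-(x ^ (p - 1) * (1 - x ^ p) ^ (1 / p - 1))) x := by
  convert ((hasDerivAt_rpow_const (Or.inr hp)).const_sub 1).rpow_const (p := 1 / p)
    (Or.inl hx.ne') using 1
  field_simp

lemma continuous_one_sub_rpow_rpow_one_div (hp : 0 < p) :
    Continuous fun x : ℝ => (1 - x ^ p) ^ (1 / p) :=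
  (continuous_const.sub (continuous_id.rpow_const fun _ => Or.inr hp.le)).rpow_const
    fun _ => Or.inr (by positivity)

lemma rpow_one_div_rpow {y : ℝ} (hy : 0 ≤ y) (hp : p ≠ 0) : (y ^ (1 / p)) ^ p = y := by
  rw [one_div, rpow_inv_rpow hy hp]

lemma doubling_rpow (hp : 0 < p) {σ : ℝ} (hσ : 0 ≤ σ) (hσ1 : σ ^ p ≤ 1) :
    (2 ^ (2 / p) * σ * (1 - σ ^ p) ^ (1 / p)) ^ p = 1 - (1 - 2 * σ ^ p) ^ 2 := by
  have h2 : ((2:ℝ) ^ (2 / p)) ^ p = 4 := by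
    rw [← rpow_mul zero_le_two, div_mul_cancel₀ _ hp.ne']; norm_num
  rw [mul_rpow (by positivity) (rpow_nonneg (sub_nonneg.2 hσ1) _), mul_rpow (by positivity) hσ,
    h2,     rpow_one_div_rpow (sub_nonneg.2 hσ1) hp.ne']
  ring

lemma doubling_nonneg {σ : ℝ} (hσ : 0 ≤ σ) (hσ1 : σ ^ p ≤ 1) :
    0 ≤ 2 ^ (2 / p) * σ * (1 - σ ^ p) ^ (1 / p) := by
  have := rpow_nonneg (sub_nonneg.2 hσ1) (1 / p)
  positivity

lemma doubling_le_one (hp : 0 < p) {σ : ℝ} (hσ : 0 ≤ σ) (hσ1 : σ ^ p ≤ 1) :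
    2 ^ (2 / p) * σ * (1 - σ ^ p) ^ (1 / p) ≤ 1 := by
  rw [← rpow_le_rpow_iff (doubling_nonneg hσ hσ1) zero_le_one hp, one_rpow,
    doubling_rpow hp hσ hσ1]
  nlinarith

lemma doubling_lt_one (hp : 0 < p) {σ : ℝ} (hσ : 0 ≤ σ) (hσ1 : σ ^ p < 1 / 2) :
    2 ^ (2 / p) * σ * (1 - σ ^ p) ^ (1 / p) < 1 := by
  rw [← rpow_lt_rpow_iff (doubling_nonneg hσ (by linarith)) zero_le_one hp, one_rpow,
    doubling_rpow hp hσ (by linarith)]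
  nlinarith

end Doubling

section ConjugateExponents

variable {p r : ℝ}

lemma neg_one_div_eq_one_div_sub_one (hpr : p.HolderConjugate r) : -(1 / r) = 1 / p - 1 := by
  rw [one_div, one_div, hpr.inv_sub_one]

lemma hasDerivAt_arcsinpq_two_doubling (hpr : p.HolderConjugate r) {x : ℝ} (hx : 0 ≤ x)
    (hxp : x ^ p < 1 / 2) :
    HasDerivAt (fun x => arcsinpq 2 p (2 ^ (2 / p) * x * (1 - x ^ p) ^ (1 / p)))
      (2 ^ (2 / p) * (1 - x ^ p) ^ (-(1 / r))) x := by
  have hp := hpr.lt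
  have hY : 0 < 1 - x ^ p := by linarith
  have hB : 0 < 1 - 2 * x ^ p := by linarith
  have hF := arcsinpq_hasDerivAt one_lt_two hp.le
    ⟨doubling_nonneg hx (by linarith), doubling_lt_one (by linarith) hx hxp⟩
  have hφ := ((hasDerivAt_id' x).const_mul (2 ^ (2 / p))).fun_mul
    (hasDerivAt_one_sub_rpow_rpow_one_div hp.le hY)
  refine (hF.comp x hφ).congr_deriv ?_
  -- `1 - φ(x) ^ p = (1 - 2 x ^ p) ^ 2`, and the factor `1 - 2 x ^ p` cancels against `φ'(x)`
  have hF' : (1 - (2 ^ (2 / p) * x * (1 - x ^ p) ^ (1 / p)) ^ p) ^ (-(1 / 2 : ℝ))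
      = (1 - 2 * x ^ p)⁻¹ := by
    rw [doubling_rpow (by linarith) hx (by linarith), sub_sub_cancel, rpow_neg (sq_nonneg _),
      ← sqrt_eq_rpow, sqrt_sq hB.le]
  have hxx : x * x ^ (p - 1) = x ^ p := by
    rw [mul_comm, ← rpow_add_one' hx (by linarith), sub_add_cancel]
  have hYY : (1 - x ^ p) ^ (1 / p) = (1 - x ^ p) ^ (1 / p - 1) * (1 - x ^ p) := by
    rw [← rpow_add_one' hY.le (by rw [sub_add_cancel]; positivity), sub_add_cancel]
  rw [hF', neg_one_div_eq_one_div_sub_one hpr, hYY]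
  field_simp
  linear_combination -hxx

lemma arcsinpq_two_doubling (hpr : p.HolderConjugate r) {σ : ℝ} (hσ : 0 ≤ σ)
    (hσ1 : σ ^ p ≤ 1 / 2) :
    arcsinpq 2 p (2 ^ (2 / p) * σ * (1 - σ ^ p) ^ (1 / p)) = 2 ^ (2 / p) * arcsinpq r p σ := by
  have hp := hpr.lt
  have hs₁p : ((1 / 2 : ℝ) ^ (1 / p)) ^ p = 1 / 2 :=
    rpow_one_div_rpow (by norm_num) (by linarith)
  set s₁ : ℝ := (1 / 2) ^ (1 / p)
  have hs₁1 : s₁ < 1 := rpow_lt_one (by norm_num) (by norm_num) (by positivity)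
  have hle : ∀ {x}, 0 ≤ x → (x ≤ s₁ ↔ x ^ p ≤ 1 / 2) := fun hx => by
    rw [← hs₁p, rpow_le_rpow_iff hx (by positivity) (by linarith)]
  have hlt : ∀ {x}, 0 ≤ x → (x < s₁ ↔ x ^ p < 1 / 2) := fun hx => by
    rw [← hs₁p, rpow_lt_rpow_iff hx (by positivity) (by linarith)]
  refine eq_of_has_deriv_right_eq (a := 0) (b := s₁)
    (f := fun x => arcsinpq 2 p (2 ^ (2 / p) * x * (1 - x ^ p) ^ (1 / p)))
    (g := fun x => 2 ^ (2 / p) * arcsinpq r p x)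
    (fun x hx => (hasDerivAt_arcsinpq_two_doubling hpr hx.1 ((hlt hx.1).1 hx.2)).hasDerivWithinAt)
    (fun x hx => ((arcsinpq_hasDerivAt hpr.symm.lt hp.le
      ⟨hx.1, hx.2.trans hs₁1⟩).const_mul _).hasDerivWithinAt)
    ?_ ?_ ?_ σ ⟨hσ, (hle hσ).2 hσ1⟩
  · refine (arcsinpq_continuousOn one_lt_two hp.le).comp ((continuous_const.mul continuous_id).mul
      (continuous_one_sub_rpow_rpow_one_div (by linarith))).continuousOn fun x hx => ?_
    have hx1 : x ^ p ≤ 1 := by linarith [(hle hx.1).1 hx.2]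
    exact ⟨doubling_nonneg hx.1 hx1, doubling_le_one (by linarith) hx.1 hx1⟩
  · exact ((arcsinpq_continuousOn hpr.symm.lt hp.le).mono
      (Icc_subset_Icc le_rfl hs₁1.le)).const_mul _
  · simp [arcsinpq_zero, zero_rpow (by linarith : p ≠ 0)]

lemma hasDerivAt_arcsinpq_add_arcsinpq_one_sub_rpow (hpr : p.HolderConjugate r) {y : ℝ}
    (hy : y ∈ Ioo (0:ℝ) 1) :
    HasDerivAt (fun y => arcsinpq r p y + arcsinpq r p ((1 - y ^ p) ^ (1 / p))) 0 y := by
  have hp := hpr.lt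
  have hyp1 : y ^ p < 1 := rpow_lt_one hy.1.le hy.2 (by linarith)
  have hyp0 : 0 < y ^ p := rpow_pos_of_pos hy.1 _
  have hF1 := arcsinpq_hasDerivAt hpr.symm.lt hp.le ⟨hy.1.le, hy.2⟩
  have hF2 := arcsinpq_hasDerivAt hpr.symm.lt hp.le (s := (1 - y ^ p) ^ (1 / p))
    ⟨rpow_nonneg (by linarith) _, rpow_lt_one (by linarith) (by linarith) (by positivity)⟩
  refine (hF1.add (hF2.comp y (hasDerivAt_one_sub_rpow_rpow_one_div hp.le (by linarith))))
    |>.congr_deriv ?_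
  have hyy : (y ^ p) ^ (1 / p - 1) * y ^ (p - 1) = 1 := by
    rw [← rpow_mul hy.1.le, ← rpow_add hy.1,
      show p * (1 / p - 1) + (p - 1) = 0 by field_simp; ring, rpow_zero]
  rw [rpow_one_div_rpow (by linarith) (by linarith), sub_sub_cancel,
    neg_one_div_eq_one_div_sub_one hpr]
  linear_combination (-(1 - y ^ p) ^ (1 / p - 1)) * hyy

lemma arcsinpq_add_arcsinpq_one_sub_rpow (hpr : p.HolderConjugate r) {σ : ℝ}
    (hσ : σ ∈ Icc (0:ℝ) 1) :
    arcsinpq r p σ + arcsinpq r p ((1 - σ ^ p) ^ (1 / p)) = pipq r p / 2 := by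
  have hp := hpr.lt
  rcases hσ.1.eq_or_lt with rfl | hσ0
  · rw [zero_rpow (by linarith), sub_zero, one_rpow, arcsinpq_zero, arcsinpq_one, zero_add]
  have hψ_mem : ∀ y ∈ Icc σ 1, (1 - y ^ p) ^ (1 / p) ∈ Icc (0:ℝ) 1 := fun y hy => by
    have hy0 : 0 ≤ y ^ p := rpow_nonneg (hσ0.le.trans hy.1) _
    have hy1 : y ^ p ≤ 1 := rpow_le_one (hσ0.le.trans hy.1) hy.2 (by linarith)
    exact ⟨rpow_nonneg (by linarith) _, rpow_le_one (by linarith) (by linarith) (by positivity)⟩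
  have hconst := constant_of_has_deriv_right_zero (a := σ) (b := 1)
    (f := fun y => arcsinpq r p y + arcsinpq r p ((1 - y ^ p) ^ (1 / p)))
    (((arcsinpq_continuousOn hpr.symm.lt hp.le).mono (Icc_subset_Icc hσ0.le le_rfl)).add
      ((arcsinpq_continuousOn hpr.symm.lt hp.le).comp
        (continuous_one_sub_rpow_rpow_one_div (by linarith)).continuousOn hψ_mem))
    (fun y hy => (hasDerivAt_arcsinpq_add_arcsinpq_one_sub_rpow hpr
      ⟨hσ0.trans_le hy.1, hy.2⟩).hasDerivWithinAt) 1 ⟨hσ.2, le_rfl⟩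
  rw [one_rpow, sub_self, zero_rpow (by positivity), arcsinpq_zero, add_zero,
    arcsinpq_one] at hconst
  exact hconst.symm

lemma arcsinpq_half_rpow_one_div (hpr : p.HolderConjugate r) :
    arcsinpq r p ((1 / 2) ^ (1 / p)) = pipq r p / 4 := by
  have hp := hpr.lt
  have h := arcsinpq_add_arcsinpq_one_sub_rpow hpr (σ := (1 / 2) ^ (1 / p))
    ⟨by positivity, rpow_le_one (by norm_num) (by norm_num) (by positivity)⟩
  rw [rpow_one_div_rpow (by norm_num) (by linarith), show (1:ℝ) - 1 / 2 = 1 / 2 by norm_num] at h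
  linarith

lemma pipq_two_eq (hpr : p.HolderConjugate r) : pipq 2 p = 2 ^ (2 / p) * pipq r p / 2 := by
  have hp := hpr.lt
  have hs₁ : ((1 / 2 : ℝ) ^ (1 / p)) ^ p = 1 / 2 :=
    rpow_one_div_rpow (by norm_num) (by linarith)
  have h := arcsinpq_two_doubling hpr (σ := (1 / 2) ^ (1 / p)) (by positivity) hs₁.le
  have hφ :
      2 ^ (2 / p) * (1 / 2) ^ (1 / p) * (1 - ((1 / 2 : ℝ) ^ (1 / p)) ^ p) ^ (1 / p) = 1 := by
    rw [← rpow_left_inj (doubling_nonneg (by positivity) (by linarith)) zero_le_one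
        (by linarith : p ≠ 0),
      doubling_rpow (by linarith) (by positivity) (by linarith), hs₁, one_rpow]
    norm_num
  rw [hφ, arcsinpq_one, arcsinpq_half_rpow_one_div hpr] at h
  linarith

lemma sinpq_two_doubling_arcsinpq_of_rpow_le_half (hpr : p.HolderConjugate r) {σ : ℝ}
    (hσ : 0 ≤ σ) (hσ1 : σ ^ p ≤ 1 / 2) :
    sinpq 2 p (2 ^ (2 / p) * arcsinpq r p σ) = 2 ^ (2 / p) * σ * (1 - σ ^ p) ^ (1 / p) ∧
      cospq 2 p (2 ^ (2 / p) * arcsinpq r p σ) = 1 - 2 * σ ^ p := by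
  have hp := hpr.lt
  have hφ : 2 ^ (2 / p) * σ * (1 - σ ^ p) ^ (1 / p) ∈ Icc (0:ℝ) 1 :=
    ⟨doubling_nonneg hσ (by linarith), doubling_le_one (by linarith) hσ (by linarith)⟩
  rw [← arcsinpq_two_doubling hpr hσ hσ1]
  refine ⟨sinpq_arcsinpq one_lt_two hp.le hφ, ?_⟩
  rw [cospq_eq_of_mem_Icc one_lt_two hp.le ((arcsinpq_bijOn one_lt_two hp.le).mapsTo hφ),
    sinpq_arcsinpq one_lt_two hp.le hφ, doubling_rpow (by linarith) hσ (by linarith),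
    sub_sub_cancel, ← sqrt_eq_rpow, sqrt_sq (by linarith)]

lemma sinpq_two_doubling_arcsinpq (hpr : p.HolderConjugate r) {σ : ℝ}
    (hσ : σ ∈ Icc (0:ℝ) 1) :
    sinpq 2 p (2 ^ (2 / p) * arcsinpq r p σ) = 2 ^ (2 / p) * σ * (1 - σ ^ p) ^ (1 / p) ∧
      cospq 2 p (2 ^ (2 / p) * arcsinpq r p σ) = 1 - 2 * σ ^ p := by
  have hp := hpr.lt
  rcases le_total (σ ^ p) (1 / 2) with hσ1 | hσ1
  · exact sinpq_two_doubling_arcsinpq_of_rpow_le_half hpr hσ.1 hσ1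
  set τ := (1 - σ ^ p) ^ (1 / p)
  have hσp1 : σ ^ p ≤ 1 := rpow_le_one hσ.1 hσ.2 (by linarith)
  have hτp : τ ^ p = 1 - σ ^ p := rpow_one_div_rpow (sub_nonneg.2 hσp1) (by linarith)
  have hτσ : (1 - τ ^ p) ^ (1 / p) = σ := by
    rw [hτp, sub_sub_cancel, one_div, rpow_rpow_inv hσ.1 (by linarith)]
  obtain ⟨hsin, hcos⟩ := sinpq_two_doubling_arcsinpq_of_rpow_le_half hpr (σ := τ)
    (rpow_nonneg (sub_nonneg.2 hσp1) _) (by linarith)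
  have harg : 2 ^ (2 / p) * arcsinpq r p σ = pipq 2 p - 2 ^ (2 / p) * arcsinpq r p τ := by
    rw [pipq_two_eq hpr]
    linear_combination 2 ^ (2 / p) * arcsinpq_add_arcsinpq_one_sub_rpow hpr hσ
  rw [harg, sinpq_pipq_sub one_lt_two hp.le, cospq_pipq_sub one_lt_two hp.le, hsin, hcos, hτσ,
    hτp]
  constructor <;> ring

end ConjugateExponents

section MultipleAngle

variable {p r : ℝ}

lemma sinpq_two_doubling_of_mem_Icc (hpr : p.HolderConjugate r) {x : ℝ}
    (hx : x ∈ Icc 0 (pipq r p / 2)) :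
    sinpq 2 p (2 ^ (2 / p) * x)
        = 2 ^ (2 / p) * sinpq r p x * |cospq r p x| ^ (r - 2) * cospq r p x ∧
      cospq 2 p (2 ^ (2 / p) * x) = 1 - 2 * |sinpq r p x| ^ p := by
  have hp := hpr.lt
  have hr := hpr.symm.lt
  have hs := sinpq_mem_Icc hr hp.le hx
  obtain ⟨hsin, hcos⟩ := sinpq_two_doubling_arcsinpq hpr hs
  rw [arcsinpq_sinpq hr hp.le hx] at hsin hcos
  have hbase : 0 ≤ 1 - sinpq r p x ^ p := sub_nonneg.2 (rpow_le_one hs.1 hs.2 (by linarith))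
  have hC : |cospq r p x| ^ (r - 2) * cospq r p x = (1 - sinpq r p x ^ p) ^ (1 / p) := by
    rw [abs_of_nonneg (cospq_nonneg_of_mem_Icc hr hp.le hx),
      ← rpow_add_one' (cospq_nonneg_of_mem_Icc hr hp.le hx) (by linarith),
      cospq_eq_of_mem_Icc hr hp.le hx, ← rpow_mul hbase]
    congr 1
    field_simp
    linarith [hpr.mul_eq_add]
  rw [abs_of_nonneg hs.1, mul_assoc (2 ^ (2 / p) * sinpq r p x), hC]
  exact ⟨hsin, hcos⟩

theorem sinpq_two_doubling_and_cospq_two_doubling (hpr : p.HolderConjugate r) (x : ℝ) :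
    sinpq 2 p (2 ^ (2 / p) * x)
        = 2 ^ (2 / p) * sinpq r p x * |cospq r p x| ^ (r - 2) * cospq r p x ∧
      cospq 2 p (2 ^ (2 / p) * x) = 1 - 2 * |sinpq r p x| ^ p := by
  have hp := hpr.lt
  have hr := hpr.symm.lt
  refine forall_of_Icc_of_neg_of_add (P := fun x => sinpq 2 p (2 ^ (2 / p) * x)
      = 2 ^ (2 / p) * sinpq r p x * |cospq r p x| ^ (r - 2) * cospq r p x ∧
        cospq 2 p (2 ^ (2 / p) * x) = 1 - 2 * |sinpq r p x| ^ p)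
    (pipq_pos hr hp.le) (fun y hy => sinpq_two_doubling_of_mem_Icc hpr hy)
    (fun y ⟨hsin, hcos⟩ => ?_) (fun y ⟨hsin, hcos⟩ => ?_) x
  · rw [mul_neg, sinpq_neg one_lt_two hp.le, cospq_neg one_lt_two hp.le, sinpq_neg hr hp.le,
      cospq_neg hr hp.le, abs_neg, hsin, hcos]
    exact ⟨by ring, rfl⟩
  · have harg : 2 ^ (2 / p) * (y + pipq r p) = 2 ^ (2 / p) * y + pipq 2 p + pipq 2 p := by
      rw [pipq_two_eq hpr]; ring
    rw [harg, sinpq_add_pipq one_lt_two hp.le, sinpq_add_pipq one_lt_two hp.le,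
      cospq_add_pipq one_lt_two hp.le, cospq_add_pipq one_lt_two hp.le, sinpq_add_pipq hr hp.le,
      cospq_add_pipq hr hp.le, abs_neg, abs_neg, neg_neg, neg_neg, hsin, hcos]
    exact ⟨by ring, rfl⟩

end MultipleAngle

/-- Multiple-angle formulas on all of `ℝ`:
`sin_{2,p}(2^{2/p}x) = 2^{2/p} sin_{p*,p}(x)|cos_{p*,p}(x)|^{p*-2} cos_{p*,p}(x)` and
`cos_{2,p}(2^{2/p}x) = |cos_{p*,p}(x)|^{p*} - |sin_{p*,p}(x)|^p = 1 - 2|sin_{p*,p}(x)|^p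
 = 2|cos_{p*,p}(x)|^{p*} - 1`, where `p* = p/(p-1)`. -/
theorem multiple_angle_real (p : ℝ) (hp : 1 < p) :
    ∀ x : ℝ,
      sinpq 2 p ((2:ℝ) ^ (2/p) * x)
          = (2:ℝ) ^ (2/p) * sinpq (p/(p-1)) p x * |cospq (p/(p-1)) p x| ^ (p/(p-1) - 2)
              * cospq (p/(p-1)) p x ∧
      cospq 2 p ((2:ℝ) ^ (2/p) * x)
          = |cospq (p/(p-1)) p x| ^ (p/(p-1)) - |sinpq (p/(p-1)) p x| ^ p ∧
      cospq 2 p ((2:ℝ) ^ (2/p) * x) = 1 - 2 * |sinpq (p/(p-1)) p x| ^ p ∧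
      cospq 2 p ((2:ℝ) ^ (2/p) * x) = 2 * |cospq (p/(p-1)) p x| ^ (p/(p-1)) - 1 := by
  intro x
  have hpr : p.HolderConjugate (p / (p - 1)) := .conjExponent hp
  obtain ⟨hsin, hcos⟩ := sinpq_two_doubling_and_cospq_two_doubling hpr x
  have hpythagoras := abs_sinpq_rpow_add_abs_cospq_rpow hpr.symm.lt hp.le x
  exact ⟨hsin, by linarith, hcos, by linarith⟩
end

section
/- For every p ∈ (1,∞), setting p* = p/(p−1), and for every y ∈ [0, 2^{−1/p}], one has the substitution identity ∫₀^y (1−t^p)^{−1/p*} dt = 2^{−2/p} · ∫₀^{y·(4(1−y^p))^{1/p}} (1−s^p)^{−1/2} ds; that is, sin_{p*,p}^{−1}(y) = 2^{−2/p}·sin_{2,p}^{−1}( y·(4(1−y^p))^{1/p} ). -/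
open Real Set MeasureTheory Filter

/-! With `u = x ^ p`, the map `g = doubleAngle p`, `g x = x (4 (1 - x ^ p)) ^ (1 / p)`, satisfies
`g x ^ p = 4u(1 - u)`, so `1 - g x ^ p = (1 - 2u) ^ 2`; for `p = 2` this is the double-angle
formula `sin 2θ = 2 sin θ cos θ`. The chain rule then gives
`2 ^ (-2/p) (1 - g ^ p) ^ (-1/2) g' = (1 - x ^ p) ^ (1/p - 1)` on `[0, 2 ^ (-1/p))`, so both sides
have the same right derivative there and agree at `0`. They are continuous up to the endpoint,
where `g` reaches `1` and the integrand of `sin_{2,p}^{-1}` has an integrable singularity. -/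

lemma continuousAt_one_sub_rpow_rpow {p : ℝ} (hp : 0 ≤ p) (r : ℝ) {t : ℝ} (ht : t ^ p ≠ 1) :
    ContinuousAt (fun t : ℝ => (1 - t ^ p) ^ r) t :=
  (continuousAt_const.sub (continuousAt_rpow_const t p (Or.inr hp))).rpow_const
    (Or.inl (sub_ne_zero.2 ht.symm))

lemma intervalIntegrable_one_sub_rpow_rpow {p r : ℝ} (hp : 1 ≤ p) (hr : -1 < r) (hr0 : r ≤ 0) :
    IntervalIntegrable (fun s : ℝ => (1 - s ^ p) ^ r) volume 0 1 := by
  have hdom : IntervalIntegrable (fun s : ℝ => (1 - s) ^ r) volume 0 1 := by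
    simpa using
      ((intervalIntegral.intervalIntegrable_rpow' (a := 0) (b := 1) hr).comp_sub_left 1).symm
  refine hdom.mono_fun (by fun_prop : Measurable _).aestronglyMeasurable ?_
  filter_upwards [ae_restrict_mem measurableSet_uIoc] with s hs
  rw [uIoc_of_le zero_le_one] at hs
  have hsp : s ^ p ≤ s := by simpa using rpow_le_rpow_of_exponent_ge hs.1 hs.2 hp
  rw [norm_of_nonneg (rpow_nonneg (by linarith [hs.2]) _),
    norm_of_nonneg (rpow_nonneg (by linarith [hs.2]) _)]
  rcases hs.2.lt_or_eq with hs1 | rfl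
  · exact rpow_le_rpow_of_nonpos (sub_pos.2 hs1) (by linarith) hr0
  · simp

lemma hasDerivAt_arcsinpq {p q x : ℝ} (hp : 0 ≤ p) (hx : 0 ≤ x) (hx1 : x ^ p < 1) :
    HasDerivAt (arcsinpq q p) ((1 - x ^ p) ^ (-(1 / q))) x := by
  have hcont : ∀ t ∈ Icc 0 x, ContinuousAt (fun t : ℝ => (1 - t ^ p) ^ (-(1 / q))) t :=
    fun t ht => continuousAt_one_sub_rpow_rpow hp _ ((rpow_le_rpow ht.1 ht.2 hp).trans_lt hx1).ne
  refine intervalIntegral.integral_hasDerivAt_right ?_ ?_ (hcont x ⟨hx, le_rfl⟩)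
  · refine ContinuousOn.intervalIntegrable fun t ht => (hcont t ?_).continuousWithinAt
    rwa [uIcc_of_le hx] at ht
  · exact (by fun_prop : Measurable _).aestronglyMeasurable.stronglyMeasurableAtFilter

lemma continuousOn_arcsinpq {p q : ℝ} (hp : 1 ≤ p) (hq : 1 < q) :
    ContinuousOn (arcsinpq q p) (Icc 0 1) := by
  have hint := intervalIntegrable_one_sub_rpow_rpow hp (r := -(1 / q))
    (neg_lt_neg ((div_lt_one (by linarith)).2 hq)) (neg_nonpos.2 (by positivity))
  have := intervalIntegral.continuousOn_primitive_interval (μ := volume)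
    (((intervalIntegrable_iff_integrableOn_Icc_of_le zero_le_one).1 hint).mono_set
      (uIcc_of_le zero_le_one).subset)
  rwa [uIcc_of_le zero_le_one] at this

noncomputable def doubleAngle (p x : ℝ) : ℝ := x * (4 * (1 - x ^ p)) ^ (1 / p)

section doubleAngle

variable {p x : ℝ}

lemma continuous_doubleAngle (hp : 0 ≤ p) : Continuous (doubleAngle p) :=
  continuous_id.mul <|
    (continuous_const.mul (continuous_const.sub (continuous_rpow_const hp))).rpow_const
      fun _ => Or.inr (by positivity)

lemma one_sub_doubleAngle_rpow (hp : p ≠ 0) (hx : 0 ≤ x) (hx1 : x ^ p ≤ 1) :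
    1 - doubleAngle p x ^ p = (1 - 2 * x ^ p) ^ 2 := by
  rw [doubleAngle, mul_rpow hx (rpow_nonneg (by linarith) _), one_div,
    rpow_inv_rpow (by linarith) hp]
  ring

lemma doubleAngle_nonneg (hx : 0 ≤ x) (hx1 : x ^ p ≤ 1) : 0 ≤ doubleAngle p x :=
  mul_nonneg hx (rpow_nonneg (by linarith) _)

lemma doubleAngle_mem_Icc (hp : 0 < p) (hx : 0 ≤ x) (hx1 : x ^ p ≤ 1) :
    doubleAngle p x ∈ Icc 0 1 := by
  refine ⟨doubleAngle_nonneg hx hx1, ?_⟩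
  rw [← rpow_le_rpow_iff (doubleAngle_nonneg hx hx1) zero_le_one hp, one_rpow]
  nlinarith [one_sub_doubleAngle_rpow hp.ne' hx hx1, sq_nonneg (1 - 2 * x ^ p)]

lemma doubleAngle_rpow_lt_one (hp : p ≠ 0) (hx : 0 ≤ x) (hx1 : x ^ p < 1 / 2) :
    doubleAngle p x ^ p < 1 := by
  have := one_sub_doubleAngle_rpow hp hx (by linarith)
  nlinarith

lemma hasDerivAt_doubleAngle (hp : 1 ≤ p) (hx : 0 ≤ x) (hx1 : x ^ p < 1) :
    HasDerivAt (doubleAngle p) (4 ^ (1 / p) * (1 - 2 * x ^ p) * (1 - x ^ p) ^ (1 / p - 1)) x := by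
  have hb : 0 < 1 - x ^ p := sub_pos.2 hx1
  have hxx : x * x ^ (p - 1) = x ^ p := by
    conv_rhs => rw [show p = 1 + (p - 1) by ring]
    rw [rpow_add' hx (by linarith), rpow_one]
  have h : HasDerivAt (fun z => z * (4 * (1 - z ^ p)) ^ (1 / p)) _ x :=
    (hasDerivAt_id' x).mul ((((hasDerivAt_rpow_const (p := p) (Or.inr hp)).const_sub 1).const_mul
      4).rpow_const (p := 1 / p) (Or.inl (by positivity)))
  refine h.congr_deriv ?_
  rw [show x * (4 * -(p * x ^ (p - 1)) * (1 / p) * (4 * (1 - x ^ p)) ^ (1 / p - 1)) =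
    -4 * (x * x ^ (p - 1)) * (p / p) * (4 * (1 - x ^ p)) ^ (1 / p - 1) by ring, hxx,
    div_self (by linarith), rpow_sub_one (by positivity), rpow_sub_one (by positivity),
    mul_rpow (by norm_num) hb.le]
  field_simp
  ring

end doubleAngle

lemma hasDerivAt_arcsinpq_doubleAngle {p x : ℝ} (hp : 1 < p) (hx : 0 ≤ x) (hx1 : x ^ p < 1 / 2) :
    HasDerivAt (fun z => 2 ^ (-(2 / p)) * arcsinpq 2 p (doubleAngle p z))
      ((1 - x ^ p) ^ (1 / p - 1)) x := by
  have hp0 : p ≠ 0 := by linarith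
  have h2x : 0 < 1 - 2 * x ^ p := by linarith
  have hΦ := hasDerivAt_arcsinpq (q := 2) (by linarith) (doubleAngle_nonneg hx (by linarith))
    (doubleAngle_rpow_lt_one hp0 hx hx1)
  refine ((hΦ.comp x (hasDerivAt_doubleAngle hp.le hx (by linarith))).const_mul _).congr_deriv ?_
  have hsqrt : ((1 - 2 * x ^ p) ^ 2) ^ (-(1 / 2 : ℝ)) = (1 - 2 * x ^ p)⁻¹ := by
    rw [rpow_neg (sq_nonneg _), ← sqrt_eq_rpow, sqrt_sq h2x.le]
  have h4 : (2 : ℝ) ^ (-(2 / p)) * 4 ^ (1 / p) = 1 := by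
    rw [rpow_neg zero_le_two, show (4 : ℝ) = 2 ^ (2 : ℝ) by norm_num, ← rpow_mul zero_le_two,
      mul_one_div, inv_mul_cancel₀ (by positivity)]
  rw [one_sub_doubleAngle_rpow hp0 hx (by linarith), hsqrt]
  calc 2 ^ (-(2 / p)) * ((1 - 2 * x ^ p)⁻¹ *
          (4 ^ (1 / p) * (1 - 2 * x ^ p) * (1 - x ^ p) ^ (1 / p - 1)))
      = (2 ^ (-(2 / p)) * 4 ^ (1 / p)) * ((1 - 2 * x ^ p)⁻¹ * (1 - 2 * x ^ p)) *
          (1 - x ^ p) ^ (1 / p - 1) := by ring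
    _ = (1 - x ^ p) ^ (1 / p - 1) := by rw [h4, inv_mul_cancel₀ h2x.ne', one_mul, one_mul]

theorem arcsinpq_conj_eq_mul_arcsinpq_doubleAngle {p y : ℝ} (hp : 1 < p)
    (hy : y ∈ Icc 0 ((2 : ℝ) ^ (-(1 / p)))) :
    arcsinpq (p / (p - 1)) p y = 2 ^ (-(2 / p)) * arcsinpq 2 p (doubleAngle p y) := by
  have hp0 : 0 < p := by linarith
  set c : ℝ := 2 ^ (-(1 / p))
  have hc : c ^ p = 1 / 2 := by
    rw [← rpow_mul zero_le_two, neg_mul, one_div_mul_cancel hp0.ne', rpow_neg_one, one_div]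
  have hc1 : c ≤ 1 := rpow_le_one_of_one_le_of_nonpos one_le_two (neg_nonpos.2 (by positivity))
  have hconj : 1 < p / (p - 1) := (one_lt_div (by linarith)).2 (by linarith)
  have hexp : -(1 / (p / (p - 1))) = 1 / p - 1 := by
    field_simp
    ring
  refine eq_of_has_deriv_right_eq (f := arcsinpq (p / (p - 1)) p)
    (g := fun z => 2 ^ (-(2 / p)) * arcsinpq 2 p (doubleAngle p z))
    (f' := fun x => (1 - x ^ p) ^ (1 / p - 1))
    (fun x hx => ?_) (fun x hx => ?_) ?_ ?_ ?_ y hy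
  · have hx1 : x ^ p < 1 / 2 := hc ▸ rpow_lt_rpow hx.1 hx.2 hp0
    exact hexp ▸ (hasDerivAt_arcsinpq hp0.le hx.1 (by linarith)).hasDerivWithinAt
  · have hx1 : x ^ p < 1 / 2 := hc ▸ rpow_lt_rpow hx.1 hx.2 hp0
    exact (hasDerivAt_arcsinpq_doubleAngle hp hx.1 hx1).hasDerivWithinAt
  · exact (continuousOn_arcsinpq hp.le hconj).mono (Icc_subset_Icc_right hc1)
  · refine continuousOn_const.mul ((continuousOn_arcsinpq hp.le one_lt_two).comp
      (continuous_doubleAngle hp0.le).continuousOn fun x hx => doubleAngle_mem_Icc hp0 hx.1 ?_)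
    linarith [hc ▸ rpow_le_rpow hx.1 hx.2 hp0.le]
  · simp [arcsinpq, doubleAngle]

/-- Substitution identity: for `y ∈ [0, 2^{-1/p}]`,
`∫₀^y (1-t^p)^{-1/p*} dt = 2^{-2/p} ∫₀^{y(4(1-y^p))^{1/p}} (1-s^p)^{-1/2} ds`, i.e.
`sin_{p*,p}^{-1}(y) = 2^{-2/p} sin_{2,p}^{-1}(y(4(1-y^p))^{1/p})`, where `p* = p/(p-1)`. -/
theorem substitution_identity (p : ℝ) (hp : 1 < p) :
    ∀ y ∈ Set.Icc (0:ℝ) ((2:ℝ) ^ (-(1/p))),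
      (∫ t in (0:ℝ)..y, (1 - t ^ p) ^ (-(1/(p/(p-1)))))
          = (2:ℝ) ^ (-(2/p)) *
            ∫ s in (0:ℝ)..(y * (4 * (1 - y ^ p)) ^ (1/p)), (1 - s ^ p) ^ (-(1/2) : ℝ) ∧
      arcsinpq (p/(p-1)) p y
          = (2:ℝ) ^ (-(2/p)) * arcsinpq 2 p (y * (4 * (1 - y ^ p)) ^ (1/p)) :=
  fun _ hy =>
    have h := arcsinpq_conj_eq_mul_arcsinpq_doubleAngle hp hy
    ⟨h, h⟩
end
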